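/- Let I be an admissible tuple and let r = (r_1, …, r_{m−1}) ∈ ℚ^{m−1} satisfy r_t ∉ ℤ for all t and r_s − r_t ∉ ℤ for s ≠ t. Then for any elements u_1, …, u_{m−1} ∈ K ∖ {0} with ν(u_t) = r_t for each t, the point T_I(u_1, …, u_{m−1}) lies in U, and F(T_I(u_1, …, u_{m−1})) = φ_I(r), where φ_I(r)_ℓ = Σ_i β_{i,ℓ} · min({ν(c_{i,t}) + r_t : 1 ≤ t ≤ m−1, c_{i,t} ≠ 0} ∪ {ν(c_{i,m}) : c_{i,m} ≠ 0}). -/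
import Mathlib


/-- The additive valuation associated to the norm of a nonarchimedean normed field:
`ν x = -log ‖x‖`. -/
noncomputable def nuVal (K : Type*) [NormedField K] (x : K) : ℝ := -Real.log ‖x‖

/-- The affine form `f_i(x) = β_{i,1} x_1 + ⋯ + β_{i,m-1} x_{m-1} + β_{i,m}`
(here with `m - 1` replaced by `m`, i.e. coefficients indexed by `Fin (m+1)`). -/
noncomputable def affForm (K : Type*) [NormedField K] {N m : ℕ}
    (B : Matrix (Fin N) (Fin (m + 1)) ℤ) (i : Fin N) (x : Fin m → K) : K :=
  (∑ t : Fin m, (B i t.castSucc : K) * x t) + (B i (Fin.last m) : K)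

/-- `F(λ)_ℓ = Σ_i β_{i,ℓ} ν(f_i(λ))`. -/
noncomputable def Fmap (K : Type*) [NormedField K] {N m : ℕ}
    (B : Matrix (Fin N) (Fin (m + 1)) ℤ) (lam : Fin m → K) (ℓ : Fin (m + 1)) : ℝ :=
  ∑ i, (B i ℓ : ℝ) * nuVal K (affForm K B i lam)

/-- `I = (i_1 < ⋯ < i_{m-1})` is admissible if the corresponding minor of `B`
is invertible over `ℚ`. -/
def Admissible {N m : ℕ} (B : Matrix (Fin N) (Fin (m + 1)) ℤ) (I : Fin m → Fin N) : Prop :=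
  StrictMono I ∧ (Matrix.of fun j t : Fin m => (B (I j) t.castSucc : ℚ)).det ≠ 0


/-- The tropicalization `φ_I(r)_ℓ = Σ_i β_{i,ℓ} · min({ν(c_{i,t}) + r_t : c_{i,t} ≠ 0} ∪
{ν(c_{i,m}) : c_{i,m} ≠ 0})`. -/
noncomputable def tropPhi (K : Type*) [NormedField K] {N m : ℕ}
    (B : Matrix (Fin N) (Fin (m + 1)) ℤ) (c : Fin N → Fin (m + 1) → ℚ)
    (r : Fin m → ℝ) (ℓ : Fin (m + 1)) : ℝ :=
  ∑ i, (B i ℓ : ℝ) *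
    sInf ({x : ℝ | ∃ t : Fin m, c i t.castSucc ≠ 0 ∧ x = nuVal K ((c i t.castSucc : ℚ) : K) + r t}
      ∪ {x : ℝ | c i (Fin.last m) ≠ 0 ∧ x = nuVal K ((c i (Fin.last m) : ℚ) : K)})


private lemma nuVal_mul' {K : Type*} [NormedField K] {x y : K} (hx : x ≠ 0) (hy : y ≠ 0) :
    nuVal K (x * y) = nuVal K x + nuVal K y := by
  unfold nuVal
  rw [norm_mul, Real.log_mul (norm_ne_zero_iff.mpr hx) (norm_ne_zero_iff.mpr hy)]
  ring

private lemma nuVal_le_of_norm_le' {K : Type*} [NormedField K] {x y : K} (hy : y ≠ 0)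
    (h : ‖y‖ ≤ ‖x‖) : nuVal K x ≤ nuVal K y := by
  unfold nuVal
  have := Real.log_le_log (norm_pos_iff.mpr hy) h
  linarith

private lemma nuVal_eq_of_norm_eq' {K : Type*} [NormedField K] {x y : K}
    (h : ‖x‖ = ‖y‖) : nuVal K x = nuVal K y := by
  unfold nuVal; rw [h]

private lemma norm_sum_lt' {K : Type*} [NormedField K] [IsUltrametricDist K] {ι : Type*}
    [DecidableEq ι] (s : Finset ι) (a : ι → K) {C : ℝ} (hC : 0 < C)
    (h : ∀ j ∈ s, ‖a j‖ < C) : ‖∑ j ∈ s, a j‖ < C := by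
  induction s using Finset.induction_on with
  | empty => simpa using hC
  | @insert j s hj ih =>
    rw [Finset.sum_insert hj]
    calc ‖a j + ∑ k ∈ s, a k‖ ≤ max ‖a j‖ ‖∑ k ∈ s, a k‖ :=
          IsUltrametricDist.norm_add_le_max _ _
      _ < C := max_lt (h j (Finset.mem_insert_self _ _))
          (ih fun k hk => h k (Finset.mem_insert_of_mem hk))

private lemma norm_sum_eq_max' {K : Type*} [NormedField K] [IsUltrametricDist K] {ι : Type*}
    [Fintype ι] [DecidableEq ι] (a : ι → K) (j₀ : ι) (h0 : a j₀ ≠ 0)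
    (h : ∀ j, j ≠ j₀ → ‖a j‖ < ‖a j₀‖) : ‖∑ j, a j‖ = ‖a j₀‖ := by
  have hrest : ‖∑ j ∈ Finset.univ.erase j₀, a j‖ < ‖a j₀‖ :=
    norm_sum_lt' _ _ (norm_pos_iff.mpr h0) (fun j hj => h j (Finset.ne_of_mem_erase hj))
  rw [← Finset.add_sum_erase _ _ (Finset.mem_univ j₀),
    IsUltrametricDist.norm_add_eq_max_of_norm_ne_norm (ne_of_gt hrest)]
  exact max_eq_left hrest.le

theorem stmt2
    (K : Type*) [NormedField K] [IsAlgClosed K] [CharZero K] [CompleteSpace K]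
    [IsUltrametricDist K]
    (hQsub : ∀ q : ℚ, ∃ x : K, x ≠ 0 ∧ nuVal K x = (q : ℝ))
    (hQint : ∀ q : ℚ, q ≠ 0 → ∃ z : ℤ, nuVal K ((q : K)) = (z : ℝ))
    (n m : ℕ)
    (B : Matrix (Fin (n + m + 2)) (Fin (m + 1)) ℤ)
    (hrank : (B.map (Int.cast : ℤ → ℚ)).rank = m + 1)
    (hrows : ∀ i, ∃ ℓ, B i ℓ ≠ 0)
    (hcols : ∀ ℓ, (∑ i, B i ℓ) = 0)
    (I : Fin m → Fin (n + m + 2)) (hI : Admissible B I)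
    (T : (Fin m → K) → (Fin m → K)) (hTbij : Function.Bijective T)
    (hT : ∀ (x : Fin m → K) (j : Fin m), affForm K B (I j) (T x) = x j)
    (c : Fin (n + m + 2) → Fin (m + 1) → ℚ)
    (hc : ∀ (i : Fin (n + m + 2)) (x : Fin m → K),
      affForm K B i (T x)
        = (∑ t : Fin m, ((c i t.castSucc : ℚ) : K) * x t) + ((c i (Fin.last m) : ℚ) : K))
    (r : Fin m → ℚ)
    (hr1 : ∀ t, ∀ z : ℤ, r t ≠ (z : ℚ))
    (hr2 : ∀ s t, s ≠ t → ∀ z : ℤ, r s - r t ≠ (z : ℚ))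
    (u : Fin m → K) (hu0 : ∀ t, u t ≠ 0) (hu : ∀ t, nuVal K (u t) = ((r t : ℚ) : ℝ)) :
    (∀ i, affForm K B i (T u) ≠ 0) ∧
    ∀ ℓ : Fin (m + 1), Fmap K B (T u) ℓ = tropPhi K B c (fun t => ((r t : ℚ) : ℝ)) ℓ := by
  classical
  have core : ∀ i, affForm K B i (T u) ≠ 0 ∧
      nuVal K (affForm K B i (T u)) =
      sInf ({x : ℝ | ∃ t : Fin m, c i t.castSucc ≠ 0 ∧
            x = nuVal K ((c i t.castSucc : ℚ) : K) + ((r t : ℚ) : ℝ)}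
        ∪ {x : ℝ | c i (Fin.last m) ≠ 0 ∧ x = nuVal K ((c i (Fin.last m) : ℚ) : K)}) := by
    intro i
    set a : Fin (m + 1) → K := fun j =>
      Fin.lastCases ((c i (Fin.last m) : K)) (fun t => ((c i t.castSucc : ℚ) : K) * u t) j
      with ha
    have ha_cast : ∀ t : Fin m, a t.castSucc = ((c i t.castSucc : ℚ) : K) * u t := by
      intro t; simp [ha]
    have ha_last : a (Fin.last m) = ((c i (Fin.last m) : ℚ) : K) := by simp [ha]
    have hsum : affForm K B i (T u) = ∑ j, a j := by
      rw [hc i u, Fin.sum_univ_castSucc]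
      simp [ha_cast, ha_last]
    have hane : ∀ j, a j ≠ 0 ↔ c i j ≠ 0 := by
      intro j
      induction j using Fin.lastCases with
      | last => simp [ha_last]
      | cast t => simp [ha_cast, mul_eq_zero, hu0 t]
    -- the row of c is nonzero
    have hcrow : ∃ j, c i j ≠ 0 := by
      by_contra h
      push_neg at h
      have hz' : ∀ y : Fin m → K, affForm K B i y = 0 := by
        intro y
        obtain ⟨x, hx⟩ := hTbij.2 y
        rw [← hx, hc i x]
        simp [h]
      have hlast : B i (Fin.last m) = 0 := by
        have h0 := hz' 0
        simp [affForm] at h0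
        exact_mod_cast h0
      have hcs : ∀ t : Fin m, B i t.castSucc = 0 := by
        intro t
        have h1 := hz' (Pi.single t 1)
        simp [affForm, Pi.single_apply, mul_ite, hlast] at h1
        exact_mod_cast h1
      obtain ⟨ℓ, hℓ⟩ := hrows i
      rcases Fin.eq_castSucc_or_eq_last ℓ with ⟨t, rfl⟩ | rfl
      · exact hℓ (hcs t)
      · exact hℓ hlast
    -- valuations of the terms
    set v : Fin (m + 1) → ℝ := fun j =>
      Fin.lastCases (nuVal K ((c i (Fin.last m) : ℚ) : K))
        (fun t => nuVal K ((c i t.castSucc : ℚ) : K) + ((r t : ℚ) : ℝ)) j with hv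
    have hv_cast : ∀ t : Fin m,
        v t.castSucc = nuVal K ((c i t.castSucc : ℚ) : K) + ((r t : ℚ) : ℝ) := by
      intro t; simp [hv]
    have hv_last : v (Fin.last m) = nuVal K ((c i (Fin.last m) : ℚ) : K) := by simp [hv]
    have hval : ∀ j, a j ≠ 0 → nuVal K (a j) = v j := by
      intro j hj
      induction j using Fin.lastCases with
      | last => rw [ha_last, hv_last]
      | cast t =>
        rw [hane] at hj
        rw [ha_cast, hv_cast, nuVal_mul' (by exact_mod_cast hj) (hu0 t), hu t]
    have hvdist : ∀ j j' : Fin (m + 1), c i j ≠ 0 → c i j' ≠ 0 → j ≠ j' → v j ≠ v j' := by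
      have base : ∀ (t : Fin m), c i t.castSucc ≠ 0 → c i (Fin.last m) ≠ 0 →
          v t.castSucc ≠ v (Fin.last m) := by
        intro t hct hcl heq
        obtain ⟨zt, hzt⟩ := hQint _ hct
        obtain ⟨zl, hzl⟩ := hQint _ hcl
        rw [hv_cast, hv_last, hzt, hzl] at heq
        have : r t = ((zl - zt : ℤ) : ℚ) := by
          have : ((r t : ℚ) : ℝ) = (((zl - zt : ℤ) : ℚ) : ℝ) := by push_cast; linarith
          exact_mod_cast this
        exact hr1 t (zl - zt) this
      intro j j' hj hj' hjj'
      induction j using Fin.lastCases with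
      | last =>
        induction j' using Fin.lastCases with
        | last => exact absurd rfl hjj'
        | cast t => exact fun heq => base t hj' hj heq.symm
      | cast s =>
        induction j' using Fin.lastCases with
        | last => exact base s hj hj'
        | cast t =>
          intro heq
          have hst : s ≠ t := by
            intro h; apply hjj'; rw [h]
          obtain ⟨zs, hzs⟩ := hQint _ hj
          obtain ⟨zt, hzt⟩ := hQint _ hj'
          rw [hv_cast, hv_cast, hzs, hzt] at heq
          have : r s - r t = ((zt - zs : ℤ) : ℚ) := by
            have : ((r s - r t : ℚ) : ℝ) = (((zt - zs : ℤ) : ℚ) : ℝ) := by push_cast; linarith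
            exact_mod_cast this
          exact hr2 s t hst (zt - zs) this
    -- pick the term of maximal norm
    have hsne : (Finset.univ.filter (fun j => a j ≠ 0)).Nonempty := by
      obtain ⟨j, hj⟩ := hcrow
      exact ⟨j, by simp [Finset.mem_filter, (hane j).mpr hj]⟩
    obtain ⟨j₀, hj₀mem, hj₀max⟩ :=
      Finset.exists_max_image (Finset.univ.filter (fun j => a j ≠ 0)) (fun j => ‖a j‖) hsne
    have hj₀ : a j₀ ≠ 0 := (Finset.mem_filter.mp hj₀mem).2
    have hmax : ∀ j, j ≠ j₀ → ‖a j‖ < ‖a j₀‖ := by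
      intro j hj
      by_cases h0 : a j = 0
      · rw [h0, norm_zero]; exact norm_pos_iff.mpr hj₀
      · have hle : ‖a j‖ ≤ ‖a j₀‖ :=
          hj₀max j (by simp [Finset.mem_filter, h0])
        refine lt_of_le_of_ne hle fun heq => ?_
        exact hvdist j j₀ ((hane j).mp h0) ((hane j₀).mp hj₀) hj
          (by rw [← hval j h0, ← hval j₀ hj₀]; exact nuVal_eq_of_norm_eq' heq)
    have hnorm : ‖affForm K B i (T u)‖ = ‖a j₀‖ := by
      rw [hsum]; exact norm_sum_eq_max' a j₀ hj₀ hmax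
    have hne0 : affForm K B i (T u) ≠ 0 := by
      intro h
      rw [h, norm_zero] at hnorm
      exact hj₀ (norm_eq_zero.mp hnorm.symm)
    refine ⟨hne0, ?_⟩
    have hnu : nuVal K (affForm K B i (T u)) = v j₀ := by
      rw [← hval j₀ hj₀]; exact nuVal_eq_of_norm_eq' hnorm
    set S : Set ℝ := {x : ℝ | ∃ t : Fin m, c i t.castSucc ≠ 0 ∧
          x = nuVal K ((c i t.castSucc : ℚ) : K) + ((r t : ℚ) : ℝ)}
        ∪ {x : ℝ | c i (Fin.last m) ≠ 0 ∧ x = nuVal K ((c i (Fin.last m) : ℚ) : K)} with hS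
    have hmem : v j₀ ∈ S := by
      induction j₀ using Fin.lastCases with
      | last => exact Or.inr ⟨(hane _).mp hj₀, hv_last⟩
      | cast t => exact Or.inl ⟨t, (hane _).mp hj₀, hv_cast t⟩
    have hlb : ∀ x ∈ S, v j₀ ≤ x := by
      rintro x (⟨t, hct, rfl⟩ | ⟨hcl, rfl⟩)
      · have h0 : a t.castSucc ≠ 0 := (hane _).mpr hct
        have hle : ‖a t.castSucc‖ ≤ ‖a j₀‖ :=
          hj₀max _ (by simp [Finset.mem_filter, h0])
        have := nuVal_le_of_norm_le' h0 hle
        rw [hval _ h0, hval _ hj₀, hv_cast] at this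
        exact this
      · have h0 : a (Fin.last m) ≠ 0 := (hane _).mpr hcl
        have hle : ‖a (Fin.last m)‖ ≤ ‖a j₀‖ :=
          hj₀max _ (by simp [Finset.mem_filter, h0])
        have := nuVal_le_of_norm_le' h0 hle
        rw [hval _ h0, hval _ hj₀, hv_last] at this
        exact this
    rw [hnu]
    exact le_antisymm (le_csInf ⟨_, hmem⟩ hlb) (csInf_le ⟨v j₀, hlb⟩ hmem)
  refine ⟨fun i => (core i).1, fun ℓ => ?_⟩
  unfold Fmap tropPhi
  exact Finset.sum_congr rfl fun i _ => by rw [(core i).2]
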